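/- Let F = (f, g, h) be a GSWF on three alternatives with n voters satisfying the IIA condition, and suppose E[f] ≤ 2^{−500000}, E[g] ≤ 1/2, and E[h] ≤ 1/2. Then the probability of a non-transitive outcome satisfies P(F) > 1/10. -/

import Mathlib

open Finset

noncomputable section

/-- The discrete cube `{0,1}^n`. -/
abbrev Cube (n : ℕ) := Fin n → Bool

/-- Inner product of real-valued functions on the cube w.r.t. the uniform measure. -/
def cInner (n : ℕ) (f g : Cube n → ℝ) : ℝ :=
  (∑ x : Cube n, f x * g x) / 2 ^ n

/-- Expectation w.r.t. the uniform measure on the cube. -/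
def cExp (n : ℕ) (f : Cube n → ℝ) : ℝ :=
  (∑ x : Cube n, f x) / 2 ^ n

/-- The Walsh character `r_S`. -/
def walsh (n : ℕ) (S : Finset (Fin n)) : Cube n → ℝ :=
  fun x => ∏ i ∈ S, (2 * (if x i then (1 : ℝ) else 0) - 1)

/-- Fourier–Walsh coefficient of `f` at `S`. -/
def fcoef (n : ℕ) (f : Cube n → ℝ) (S : Finset (Fin n)) : ℝ :=
  cInner n f (walsh n S)

/-- Real-valued version of a Boolean function. -/
def BR (n : ℕ) (f : Cube n → Bool) : Cube n → ℝ :=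
  fun x => if f x then 1 else 0

/-- A triple `(x,y,z)` of preference vectors comes from a profile of linear orders
on three alternatives iff no coordinate is cyclic, i.e. `¬(x k = y k = z k)` for all `k`. -/
def Profile3Ok (n : ℕ) (x y z : Cube n) : Prop :=
  ∀ k, ¬ (x k = y k ∧ y k = z k)

/-- Probability of a non-transitive outcome for the IIA GSWF on three alternatives
given by pairwise choice functions `f, g, h`, for a uniformly random profile. -/
def PF3 (n : ℕ) (f g h : Cube n → Bool) : ℝ :=
  (Nat.card {p : Cube n × Cube n × Cube n //
      Profile3Ok n p.1 p.2.1 p.2.2 ∧ f p.1 = g p.2.1 ∧ g p.2.1 = h p.2.2} : ℝ) / 6 ^ n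

/-!
Whenever `g(y) = h(z) = 0` the outcome is cyclic unless `f(x) = 1`, and the `x`-marginal of a
uniform profile is uniform, so `P(F) ≥ P[g(y) = h(z) = 0] - E[f]`. For fixed `(y, z)` the
number of admissible `x` is `∏ᵢ (3/2)(1 - χ(yᵢ)χ(zᵢ)/3)`; expanding this product in Walsh
characters gives `P[g(y) = h(z) = 0] = ∑_S (-1/3)^|S| â(S) b̂(S)` with `a = 1 - g`, `b = 1 - h`.
The term `S = ∅` is `E[a] E[b] ≥ 1/4`, and by AM-GM and Parseval the remaining terms are at
least `-(Var a + Var b)/6 ≥ -1/12`. Hence `P(F) ≥ 1/6 - E[f] > 1/10`.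
-/

section Walsh

variable {n : ℕ}

def boolSign (b : Bool) : ℝ := 2 * (if b then 1 else 0) - 1

lemma walsh_apply (S : Finset (Fin n)) (x : Cube n) :
    walsh n S x = ∏ i ∈ S, boolSign (x i) := rfl

lemma sum_walsh_mul_walsh (x y : Cube n) :
    ∑ S, walsh n S x * walsh n S y = if x = y then 2 ^ n else 0 := by
  have hprod : ∑ S, walsh n S x * walsh n S y = ∏ i, (1 + boolSign (x i) * boolSign (y i)) := by
    simp only [prod_one_add, powerset_univ, walsh_apply, prod_mul_distrib]
  rw [hprod]
  split_ifs with hxy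
  · subst hxy
    have hb : ∀ b, 1 + boolSign b * boolSign b = 2 := by
      intro b; cases b <;> norm_num [boolSign]
    simp [hb]
  · obtain ⟨i, hi⟩ := Function.ne_iff.mp hxy
    refine prod_eq_zero (mem_univ i) ?_
    revert hi
    cases x i <;> cases y i <;> norm_num [boolSign]

lemma fcoef_empty (a : Cube n → ℝ) : fcoef n a ∅ = cExp n a := by
  simp [fcoef, cInner, cExp, walsh]

lemma sum_fcoef_sq (a : Cube n → ℝ) : ∑ S, fcoef n a S ^ 2 = cExp n (fun x => a x ^ 2) := by
  have hsum : ∑ S : Finset (Fin n), (∑ x, a x * walsh n S x) ^ 2 = 2 ^ n * ∑ x, a x ^ 2 :=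
    calc ∑ S : Finset (Fin n), (∑ x, a x * walsh n S x) ^ 2
        = ∑ x, ∑ y, a x * a y * ∑ S, walsh n S x * walsh n S y := by
          simp only [sq, sum_mul_sum]
          rw [sum_comm]
          refine sum_congr rfl fun x _ => ?_
          rw [sum_comm]
          refine sum_congr rfl fun y _ => ?_
          rw [mul_sum]
          exact sum_congr rfl fun S _ => by ring
      _ = 2 ^ n * ∑ x, a x ^ 2 := by
          simp only [sum_walsh_mul_walsh, mul_ite, mul_zero, sum_ite_eq, mem_univ, if_true, mul_sum]
          exact sum_congr rfl fun x _ => by ring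
  simp only [fcoef, cInner, cExp, div_pow, ← sum_div, hsum]
  field_simp

end Walsh

section Profiles

variable {n : ℕ}

lemma sum_cube_prod (φ : Fin n → Bool → ℝ) :
    ∑ x : Cube n, ∏ i, φ i (x i) = ∏ i, (φ i true + φ i false) := by
  simp only [← Fintype.sum_bool, Fintype.prod_sum]

/-- The number of `c` with `¬(a = b ∧ b = c)`, which is also the number of `c` with
`¬(c = a ∧ a = b)`. -/
def pairWeight (a b : Bool) : ℝ := if a = b then 1 else 2

lemma pairWeight_eq (a b : Bool) :
    pairWeight a b = 3 / 2 * (1 + -1 / 3 * (boolSign a * boolSign b)) := by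
  cases a <;> cases b <;> norm_num [pairWeight, boolSign]

lemma prod_pairWeight_eq_sum_walsh (y z : Cube n) :
    ∏ i, pairWeight (y i) (z i)
      = (3 / 2) ^ n * ∑ S, (-1 / 3) ^ #S * (walsh n S y * walsh n S z) := by
  simp only [pairWeight_eq]
  rw [prod_mul_distrib, prod_const, card_univ, Fintype.card_fin, prod_one_add, powerset_univ]
  congr 1
  refine sum_congr rfl fun S _ => ?_
  rw [prod_mul_distrib, prod_const, walsh_apply, walsh_apply, prod_mul_distrib]

instance (x y z : Cube n) : Decidable (Profile3Ok n x y z) :=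
  inferInstanceAs (Decidable (∀ k, ¬ (x k = y k ∧ y k = z k)))

lemma profile3Ok_indicator (x y z : Cube n) :
    (if Profile3Ok n x y z then (1 : ℝ) else 0)
      = ∏ i, if ¬ (x i = y i ∧ y i = z i) then 1 else 0 := by
  rw [prod_boole]
  simp [Profile3Ok]

lemma sum_profile3Ok_fst (y z : Cube n) :
    ∑ x, (if Profile3Ok n x y z then (1 : ℝ) else 0) = ∏ i, pairWeight (y i) (z i) := by
  simp only [profile3Ok_indicator]
  rw [sum_cube_prod fun i b => if ¬ (b = y i ∧ y i = z i) then 1 else 0]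
  refine prod_congr rfl fun i _ => ?_
  cases y i <;> cases z i <;> norm_num [pairWeight]

lemma sum_profile3Ok_snd_thd (x : Cube n) :
    ∑ y, ∑ z, (if Profile3Ok n x y z then (1 : ℝ) else 0) = 3 ^ n := by
  have hz (y : Cube n) :
      ∑ z, (if Profile3Ok n x y z then (1 : ℝ) else 0) = ∏ i, pairWeight (x i) (y i) := by
    simp only [profile3Ok_indicator]
    rw [sum_cube_prod fun i b => if ¬ (x i = y i ∧ y i = b) then 1 else 0]
    refine prod_congr rfl fun i _ => ?_
    cases x i <;> cases y i <;> norm_num [pairWeight]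
  have h3 (b : Bool) : pairWeight b true + pairWeight b false = 3 := by
    cases b <;> norm_num [pairWeight]
  simp only [hz]
  rw [sum_cube_prod fun i b => pairWeight (x i) b]
  simp only [h3, prod_const, card_univ, Fintype.card_fin]

end Profiles

section ProfileExp

variable {n : ℕ}

def profileExp (n : ℕ) (Φ : Cube n → Cube n → Cube n → ℝ) : ℝ :=
  (∑ x, ∑ y, ∑ z, if Profile3Ok n x y z then Φ x y z else 0) / 6 ^ n

lemma PF3_eq_profileExp (f g h : Cube n → Bool) :
    PF3 n f g h = profileExp n fun x y z => if f x = g y ∧ g y = h z then 1 else 0 := by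
  rw [PF3, profileExp, Nat.card_eq_fintype_card, Fintype.card_subtype, natCast_card_filter,
    Fintype.sum_prod_type]
  simp only [Fintype.sum_prod_type, ite_and]

lemma profileExp_mono {Φ Ψ : Cube n → Cube n → Cube n → ℝ}
    (h : ∀ x y z, Φ x y z ≤ Ψ x y z) :
    profileExp n Φ ≤ profileExp n Ψ := by
  unfold profileExp
  gcongr with x _ y _ z _
  split_ifs
  exacts [h x y z, le_rfl]

lemma profileExp_sub (Φ Ψ : Cube n → Cube n → Cube n → ℝ) :
    profileExp n (fun x y z => Φ x y z - Ψ x y z) = profileExp n Φ - profileExp n Ψ := by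
  simp only [profileExp, ← sub_div, ← sum_sub_distrib, ite_sub_ite, sub_zero]

lemma profileExp_fst (a : Cube n → ℝ) : profileExp n (fun x _ _ => a x) = cExp n a := by
  simp only [profileExp, cExp, ← mul_boole _ (a _), ← mul_sum, sum_profile3Ok_snd_thd,
    ← sum_mul]
  rw [show (6 : ℝ) ^ n = 2 ^ n * 3 ^ n by rw [← mul_pow]; norm_num]
  field_simp

lemma sum_mul_prod_pairWeight (a b : Cube n → ℝ) :
    ∑ y, ∑ z, a y * b z * ∏ i, pairWeight (y i) (z i)
      = (3 / 2) ^ n *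
          ∑ S, (-1 / 3) ^ #S * ((∑ y, a y * walsh n S y) * ∑ z, b z * walsh n S z) := by
  simp only [sum_mul_sum]
  simp only [prod_pairWeight_eq_sum_walsh, mul_sum]
  rw [eq_comm, sum_comm]
  refine sum_congr rfl fun y _ => ?_
  rw [sum_comm]
  exact sum_congr rfl fun z _ => sum_congr rfl fun S _ => by ring

lemma profileExp_snd_mul_thd (a b : Cube n → ℝ) :
    profileExp n (fun _ y z => a y * b z) = ∑ S, (-1 / 3) ^ #S * (fcoef n a S * fcoef n b S) := by
  have hrot : ∑ x, ∑ y, ∑ z, (if Profile3Ok n x y z then a y * b z else 0)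
      = ∑ y, ∑ z, a y * b z * ∏ i, pairWeight (y i) (z i) := by
    rw [sum_comm]
    refine sum_congr rfl fun y _ => ?_
    rw [sum_comm]
    simp only [← mul_boole _ (a y * b _), ← mul_sum, sum_profile3Ok_fst]
  rw [profileExp, hrot, sum_mul_prod_pairWeight,
    show (6 : ℝ) ^ n = (3 / 2) ^ n * (2 ^ n * 2 ^ n) by rw [← mul_pow, ← mul_pow]; norm_num,
    mul_div_mul_left _ _ (by positivity), sum_div]
  refine sum_congr rfl fun S _ => ?_
  simp only [fcoef, cInner]
  field_simp

end ProfileExp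

section LowerBound

variable {n : ℕ}

lemma neg_sq_add_sq_div_six_le {k : ℕ} (hk : k ≠ 0) (u v : ℝ) :
    -((u ^ 2 + v ^ 2) / 6) ≤ (-1 / 3) ^ k * (u * v) := by
  have hpow : |(-1 / 3 : ℝ) ^ k| ≤ 1 / 3 := by
    rw [abs_pow, show |(-1 / 3 : ℝ)| = 1 / 3 by norm_num]
    exact pow_le_of_le_one (by norm_num) (by norm_num) hk
  have huv : |u * v| ≤ (u ^ 2 + v ^ 2) / 2 := by
    rw [abs_mul]
    nlinarith [two_mul_le_add_sq |u| |v|, sq_abs u, sq_abs v]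
  have habs : |(-1 / 3 : ℝ) ^ k * (u * v)| ≤ 1 / 3 * ((u ^ 2 + v ^ 2) / 2) := by
    rw [abs_mul]
    gcongr
  linarith [neg_abs_le ((-1 / 3 : ℝ) ^ k * (u * v))]

lemma cExp_mul_cExp_sub_le_sum_fcoef (a b : Cube n → ℝ) :
    cExp n a * cExp n b
        - (cExp n (fun x => a x ^ 2) - cExp n a ^ 2
            + (cExp n (fun x => b x ^ 2) - cExp n b ^ 2)) / 6
      ≤ ∑ S, (-1 / 3) ^ #S * (fcoef n a S * fcoef n b S) := by
  have hsplit (c : Finset (Fin n) → ℝ) : ∑ S, c S = c ∅ + ∑ S ∈ univ.erase ∅, c S :=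
    (add_sum_erase _ _ (mem_univ _)).symm
  have ha := sum_fcoef_sq a
  have hb := sum_fcoef_sq b
  rw [hsplit, fcoef_empty] at ha hb
  have hterms : ∑ S ∈ univ.erase ∅, -((fcoef n a S ^ 2 + fcoef n b S ^ 2) / 6)
      ≤ ∑ S ∈ univ.erase ∅, (-1 / 3) ^ #S * (fcoef n a S * fcoef n b S) :=
    sum_le_sum fun S hS =>
      neg_sq_add_sq_div_six_le
        (card_ne_zero.mpr (nonempty_iff_ne_empty.mpr (ne_of_mem_erase hS))) _ _
  rw [sum_neg_distrib, ← sum_div, sum_add_distrib] at hterms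
  rw [hsplit, fcoef_empty, fcoef_empty, card_empty, pow_zero, one_mul]
  linarith

lemma cExp_BR_sq (f : Cube n → Bool) : cExp n (fun x => BR n f x ^ 2) = cExp n (BR n f) := by
  simp only [cExp, BR]
  congr 1
  refine sum_congr rfl fun x _ => ?_
  cases f x <;> norm_num

lemma cExp_BR_not (f : Cube n → Bool) : cExp n (BR n fun x => !f x) = 1 - cExp n (BR n f) := by
  have hone (x : Cube n) : BR n (fun x => !f x) x + BR n f x = 1 := by
    cases hx : f x <;> norm_num [BR, hx]
  rw [eq_sub_iff_add_eq, cExp, cExp, ← add_div, ← sum_add_distrib]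
  simp [hone]

lemma one_sixth_le_profileExp_BR_mul_BR (a b : Cube n → Bool) (ha : 1 / 2 ≤ cExp n (BR n a))
    (hb : 1 / 2 ≤ cExp n (BR n b)) : 1 / 6 ≤ profileExp n fun _ y z => BR n a y * BR n b z := by
  rw [profileExp_snd_mul_thd]
  refine le_trans ?_ (cExp_mul_cExp_sub_le_sum_fcoef _ _)
  rw [cExp_BR_sq, cExp_BR_sq]
  nlinarith [mul_nonneg (sub_nonneg.mpr ha) (sub_nonneg.mpr hb)]

end LowerBound

/-- If `E[f] ≤ 2^{-500000}`, `E[g] ≤ 1/2` and `E[h] ≤ 1/2`, then `P(F) > 1/10`. -/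
theorem PF3_gt_of_small_expectations (n : ℕ) (f g h : Cube n → Bool)
    (hf : cExp n (BR n f) ≤ (2 : ℝ) ^ (-(500000 : ℤ)))
    (hg : cExp n (BR n g) ≤ 1 / 2) (hh : cExp n (BR n h) ≤ 1 / 2) :
    PF3 n f g h > 1 / 10 := by
  have hgh := one_sixth_le_profileExp_BR_mul_BR (fun y => !g y) (fun z => !h z)
    (by rw [cExp_BR_not]; linarith) (by rw [cExp_BR_not]; linarith)
  have hε : (2 : ℝ) ^ (-(500000 : ℤ)) < 1 / 15 :=
    calc (2 : ℝ) ^ (-(500000 : ℤ)) ≤ 2 ^ (-(4 : ℤ)) :=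
          zpow_le_zpow_right₀ one_le_two (by norm_num)
      _ < 1 / 15 := by norm_num
  have hcyclic (x y z : Cube n) : BR n (fun y => !g y) y * BR n (fun z => !h z) z - BR n f x
      ≤ if f x = g y ∧ g y = h z then 1 else 0 := by
    cases hx : f x <;> cases hy : g y <;> cases hz : h z <;> norm_num [BR, hx, hy, hz]
  calc PF3 n f g h = profileExp n fun x y z => if f x = g y ∧ g y = h z then 1 else 0 :=
        PF3_eq_profileExp f g h
    _ ≥ profileExp n fun x y z => BR n (fun y => !g y) y * BR n (fun z => !h z) z - BR n f x :=
        profileExp_mono hcyclic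
    _ = (profileExp n fun _ y z => BR n (fun y => !g y) y * BR n (fun z => !h z) z)
          - cExp n (BR n f) := by
        rw [profileExp_sub, profileExp_fst]
    _ > 1 / 10 := by linarith

end
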